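/- arXiv:2407.10074 — 3 statements merged into one kernel-verified Lean document; each statement's English description precedes it below -/
import Mathlib

section
/- For integers k ≥ 1 and positive d = 2(q−1)q^{a−1}(q^{b} − q^{b'}) where 0 ≤ b' < b, a ≥ 0, a + b' ≥ 1, and k = a + b, the Griesmer sum g(k,d) := Σ_{i=0}^{k−1} ⌈d/q^i⌉ equals 2q^{a}(q^{b} − q^{b'}) − 1. -/
/-- For `q ≥ 2`, `a ≥ 0`, `0 ≤ b' < b`, `a + b' ≥ 1`, `k = a + b`, and
`d = 2(q-1)q^{a-1}(q^b - q^{b'})` (expressed as `q·d = 2(q-1)q^a(q^b - q^{b'})`),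
the Griesmer sum `g(k,d) = ∑_{i=0}^{k-1} ⌈d / q^i⌉` equals `2 q^a (q^b - q^{b'}) - 1`. -/
theorem stmt12 (q a b b' k d : ℕ) (hq : 2 ≤ q) (hb : b' < b) (hab : 1 ≤ a + b')
    (hk : k = a + b) (hd : q * d = 2 * (q - 1) * q ^ a * (q ^ b - q ^ b')) (hd0 : 0 < d) :
    ∑ i ∈ Finset.range k, ⌈(d : ℚ) / (q : ℚ) ^ i⌉ =
      2 * (q : ℤ) ^ a * ((q : ℤ) ^ b - (q : ℤ) ^ b') - 1 := by
  set e := a + b' with heq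
  have hek : e < k := by omega
  have he1 : 1 ≤ e := hab
  have hk1 : 1 ≤ k := by omega
  have hQ0 : (0:ℚ) < (q:ℚ) := by exact_mod_cast Nat.pos_of_ne_zero (by omega)
  have hQ2 : (2:ℚ) ≤ (q:ℚ) := by exact_mod_cast hq
  have hQne : (q:ℚ) ≠ 0 := ne_of_gt hQ0
  -- value of d as a rational
  have hdQ : (q:ℚ) * d = 2*((q:ℚ)-1)*(q:ℚ)^a*((q:ℚ)^b - (q:ℚ)^b') := by
    have h1 : 1 ≤ q := by omega
    have h2 : q^b' ≤ q^b := Nat.pow_le_pow_right (by omega) (le_of_lt hb)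
    have this : ((q*d:ℕ):ℚ) = ((2*(q-1)*q^a*(q^b-q^b'):ℕ):ℚ) := by exact_mod_cast hd
    push_cast [Nat.cast_sub h1, Nat.cast_sub h2] at this
    convert this using 1 <;> ring
  have hdq : (d:ℚ) = 2*((q:ℚ)-1)*((q:ℚ)^(k-1) - (q:ℚ)^(e-1)) := by
    have hmul : (q:ℚ) * d = (q:ℚ) * (2*((q:ℚ)-1)*((q:ℚ)^(k-1) - (q:ℚ)^(e-1))) := by
      rw [hdQ]
      have h1 : (q:ℚ) * (q:ℚ)^(k-1) = (q:ℚ)^a * (q:ℚ)^b := by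
        rw [← pow_succ', ← pow_add]; congr 1; omega
      have h2 : (q:ℚ) * (q:ℚ)^(e-1) = (q:ℚ)^a * (q:ℚ)^b' := by
        rw [← pow_succ', ← pow_add]; congr 1; omega
      linear_combination (-2*((q:ℚ)-1))*h1 + 2*((q:ℚ)-1)*h2
    exact mul_left_cancel₀ hQne hmul
  -- per-term values
  have case1 : ∀ i, i < e → ⌈(d:ℚ)/(q:ℚ)^i⌉ =
      2*((q:ℤ)-1)*((q:ℤ)^(k-1-i) - (q:ℤ)^(e-1-i)) := by
    intro i hi
    have hx : (d:ℚ)/(q:ℚ)^i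
        = ((2*((q:ℤ)-1)*((q:ℤ)^(k-1-i) - (q:ℤ)^(e-1-i)) : ℤ) : ℚ) := by
      rw [div_eq_iff (pow_ne_zero i hQne), hdq]
      push_cast
      have h1 : (q:ℚ)^(k-1-i) * (q:ℚ)^i = (q:ℚ)^(k-1) := by rw [← pow_add]; congr 1; omega
      have h2 : (q:ℚ)^(e-1-i) * (q:ℚ)^i = (q:ℚ)^(e-1) := by rw [← pow_add]; congr 1; omega
      linear_combination (-2*((q:ℚ)-1))*h1 + (2*((q:ℚ)-1))*h2
    rw [hx, Int.ceil_intCast]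
  have case2 : ⌈(d:ℚ)/(q:ℚ)^e⌉ = 2*((q:ℤ)-1)*(q:ℤ)^(k-1-e) - 1 := by
    have h1 : (q:ℚ)^(k-1) = (q:ℚ)^(k-1-e) * (q:ℚ)^e := by rw [← pow_add]; congr 1; omega
    have h2 : (q:ℚ)^e = (q:ℚ)^(e-1) * (q:ℚ) := by rw [← pow_succ]; congr 1; omega
    have hx : (d:ℚ)/(q:ℚ)^e = 2*((q:ℚ)-1)*(q:ℚ)^(k-1-e) - 2*((q:ℚ)-1)/(q:ℚ) := by
      rw [hdq, h1, h2]
      field_simp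
    rw [Int.ceil_eq_iff]
    push_cast
    rw [hx]
    constructor
    · have : 2*((q:ℚ)-1)/(q:ℚ) < 2 := by rw [div_lt_iff₀ hQ0]; linarith
      linarith
    · have : (1:ℚ) ≤ 2*((q:ℚ)-1)/(q:ℚ) := by rw [le_div_iff₀ hQ0]; linarith
      linarith
  have case3 : ∀ i, e < i → i < k → ⌈(d:ℚ)/(q:ℚ)^i⌉ = 2*((q:ℤ)-1)*(q:ℤ)^(k-1-i) := by
    intro i hi hik
    have h1 : (q:ℚ)^(k-1) = (q:ℚ)^(k-1-i) * (q:ℚ)^i := by rw [← pow_add]; congr 1; omega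
    have h2 : (q:ℚ)^i = (q:ℚ)^(e-1) * (q:ℚ)^(i+1-e) := by rw [← pow_add]; congr 1; omega
    have hx : (d:ℚ)/(q:ℚ)^i
        = 2*((q:ℚ)-1)*(q:ℚ)^(k-1-i) - 2*((q:ℚ)-1)/(q:ℚ)^(i+1-e) := by
      rw [hdq, h1, h2]
      field_simp
    have hε0 : (0:ℚ) ≤ 2*((q:ℚ)-1)/(q:ℚ)^(i+1-e) := div_nonneg (by linarith) (by positivity)
    have hε1 : 2*((q:ℚ)-1)/(q:ℚ)^(i+1-e) < 1 := by
      rw [div_lt_one (by positivity)]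
      calc 2*((q:ℚ)-1) < (q:ℚ)^2 := by nlinarith
        _ ≤ (q:ℚ)^(i+1-e) := by
            apply pow_le_pow_right₀ (by linarith)
            omega
    rw [Int.ceil_eq_iff]
    push_cast
    rw [hx]
    constructor
    · linarith
    · linarith
  -- split the sum
  have hsplit : ∑ i ∈ Finset.range k, ⌈(d:ℚ)/(q:ℚ)^i⌉ =
      (∑ i ∈ Finset.range e, ⌈(d:ℚ)/(q:ℚ)^i⌉) + ∑ i ∈ Finset.Ico e k, ⌈(d:ℚ)/(q:ℚ)^i⌉ := by
    rw [Finset.range_eq_Ico, ← Finset.sum_Ico_consecutive _ (Nat.zero_le e) (le_of_lt hek),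
      ← Finset.range_eq_Ico]
  have hbot : ∑ i ∈ Finset.Ico e k, ⌈(d:ℚ)/(q:ℚ)^i⌉ =
      ⌈(d:ℚ)/(q:ℚ)^e⌉ + ∑ i ∈ Finset.Ico (e+1) k, ⌈(d:ℚ)/(q:ℚ)^i⌉ :=
    Finset.sum_eq_sum_Ico_succ_bot hek _
  rw [hsplit, hbot, case2]
  rw [Finset.sum_congr rfl (fun i hi => case1 i (Finset.mem_range.mp hi))]
  rw [Finset.sum_congr rfl (fun i hi => case3 i (Finset.mem_Ico.mp hi).1 (Finset.mem_Ico.mp hi).2)]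
  -- geometric sums
  have geom : ∀ n:ℕ, ∑ i ∈ Finset.range n, 2*((q:ℤ)-1)*(q:ℤ)^(n-1-i) = 2*((q:ℤ)^n - 1) := by
    intro n
    rw [Finset.sum_range_reflect (fun j => 2*((q:ℤ)-1)*(q:ℤ)^j) n]
    have h := geom_sum_mul ((q:ℤ)) n
    calc ∑ j ∈ Finset.range n, 2*((q:ℤ)-1)*(q:ℤ)^j
        = 2*((∑ j ∈ Finset.range n, (q:ℤ)^j) * ((q:ℤ)-1)) := by
          rw [Finset.sum_mul, Finset.mul_sum]
          exact Finset.sum_congr rfl fun i _ => by ring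
      _ = 2*((q:ℤ)^n - 1) := by rw [h]
  have hGk : ∑ i ∈ Finset.range k, 2*((q:ℤ)-1)*(q:ℤ)^(k-1-i) = 2*((q:ℤ)^k - 1) := geom k
  have hGe : ∑ i ∈ Finset.range e, 2*((q:ℤ)-1)*(q:ℤ)^(e-1-i) = 2*((q:ℤ)^e - 1) := geom e
  have hre : ∑ i ∈ Finset.range k, 2*((q:ℤ)-1)*(q:ℤ)^(k-1-i) =
      (∑ i ∈ Finset.range e, 2*((q:ℤ)-1)*(q:ℤ)^(k-1-i))
      + (2*((q:ℤ)-1)*(q:ℤ)^(k-1-e)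
      + ∑ i ∈ Finset.Ico (e+1) k, 2*((q:ℤ)-1)*(q:ℤ)^(k-1-i)) := by
    rw [Finset.range_eq_Ico, ← Finset.sum_Ico_consecutive _ (Nat.zero_le e) (le_of_lt hek),
      ← Finset.range_eq_Ico, Finset.sum_eq_sum_Ico_succ_bot hek]
  have hsub : ∑ i ∈ Finset.range e, 2*((q:ℤ)-1)*((q:ℤ)^(k-1-i) - (q:ℤ)^(e-1-i)) =
      (∑ i ∈ Finset.range e, 2*((q:ℤ)-1)*(q:ℤ)^(k-1-i))
      - ∑ i ∈ Finset.range e, 2*((q:ℤ)-1)*(q:ℤ)^(e-1-i) := by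
    rw [← Finset.sum_sub_distrib]
    exact Finset.sum_congr rfl fun i _ => by ring
  rw [hsub]
  have hka : (q:ℤ)^k = (q:ℤ)^a * (q:ℤ)^b := by rw [← pow_add, hk]
  have hea : (q:ℤ)^e = (q:ℤ)^a * (q:ℤ)^b' := by rw [← pow_add, heq]
  have := hre
  rw [hGk] at this
  rw [hGe]
  linarith [this, hka, hea]
end

section
/- Let L = L₁ + uL₂ ⊆ F_{q^m} + uF_{q^m} with u² = 0, where L₁, L₂ ⊆ F_{q^m} are finite sets. For a, b ∈ F_{q^m}, the Lee weight of the codeword c_{a+ub} = (Tr(ax + u bx))_{x∈L} of the trace code C_L equals 2|L₁||L₂| − Ω, where Ω = (1/q) Σ_{u∈F_q} Σ_{y∈L₂} χ(u Tr_{q^m/q}(ay)) Σ_{x∈L₁} (χ(u Tr_{q^m/q}(bx)) + χ(u Tr_{q^m/q}((a+b)x))). -/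
open scoped Classical

/-- Let `L = L₁ + uL₂ ⊆ K + uK` (`u² = 0`), with `L₁, L₂ ⊆ K` finite,
`K/F` an extension of finite fields, `q = |F|`, and `χ` a nontrivial additive character
of `F`. For `a, b ∈ K`, the codeword `c_{a+ub} = (Tr((a+ub)z))_{z ∈ L}` of the trace code
`C_L` (indexed by `z = x + uy`, `(x,y) ∈ L₁ × L₂`) has component
`Tr_{K/F}(ax) + u·Tr_{K/F}(bx + ay)`, hence Lee weight
`#{(x,y) : Tr(bx+ay) ≠ 0} + #{(x,y) : Tr((a+b)x+ay) ≠ 0}`, and this equals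
`2|L₁||L₂| - Ω`, where
`Ω = (1/q) ∑_{u ∈ F} ∑_{y ∈ L₂} χ(u Tr(ay)) ∑_{x ∈ L₁} (χ(u Tr(bx)) + χ(u Tr((a+b)x)))`. -/
theorem stmt17 {F K : Type*} [Field F] [Fintype F] [Field K] [Fintype K] [Algebra F K]
    (χ : AddChar F ℂ) (hχ : χ ≠ 1) (L₁ L₂ : Finset K) (a b : K) :
    ((((L₁ ×ˢ L₂).filter
        (fun p => Algebra.trace F K (b * p.1 + a * p.2) ≠ 0)).card +
      ((L₁ ×ˢ L₂).filter
        (fun p => Algebra.trace F K ((a + b) * p.1 + a * p.2) ≠ 0)).card : ℂ) =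
      2 * L₁.card * L₂.card -
        (1 / (Fintype.card F : ℂ)) * ∑ u : F, ∑ y ∈ L₂,
          χ (u * Algebra.trace F K (a * y)) *
            ∑ x ∈ L₁, (χ (u * Algebra.trace F K (b * x)) +
              χ (u * Algebra.trace F K ((a + b) * x)))) := by
  have hprim : χ.IsPrimitive := AddChar.IsPrimitive.of_ne_one hχ
  have hq : (Fintype.card F : ℂ) ≠ 0 := by
    exact_mod_cast Nat.cast_ne_zero.mpr Fintype.card_ne_zero
  have key : ∀ t : F, ∑ u : F, χ (u * t) = if t = 0 then (Fintype.card F : ℂ) else 0 := by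
    intro t
    simpa using AddChar.sum_mulShift t hprim
  -- rewrite the inner character sum
  have hΩ : (∑ u : F, ∑ y ∈ L₂,
          χ (u * Algebra.trace F K (a * y)) *
            ∑ x ∈ L₁, (χ (u * Algebra.trace F K (b * x)) +
              χ (u * Algebra.trace F K ((a + b) * x)))) =
      ∑ p ∈ L₁ ×ˢ L₂,
        ((if Algebra.trace F K (b * p.1 + a * p.2) = 0 then (Fintype.card F : ℂ) else 0) +
          (if Algebra.trace F K ((a + b) * p.1 + a * p.2) = 0 then (Fintype.card F : ℂ)
            else 0)) := by
    rw [Finset.sum_comm]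
    rw [Finset.sum_product_right]
    refine Finset.sum_congr rfl fun y _ => ?_
    have : ∀ u : F, χ (u * Algebra.trace F K (a * y)) *
            ∑ x ∈ L₁, (χ (u * Algebra.trace F K (b * x)) +
              χ (u * Algebra.trace F K ((a + b) * x))) =
        ∑ x ∈ L₁, (χ (u * Algebra.trace F K (b * x + a * y)) +
          χ (u * Algebra.trace F K ((a + b) * x + a * y))) := by
      intro u
      rw [Finset.mul_sum]
      refine Finset.sum_congr rfl fun x _ => ?_
      rw [mul_add, map_add (Algebra.trace F K), map_add (Algebra.trace F K),
        mul_add u, mul_add u, AddChar.map_add_eq_mul, AddChar.map_add_eq_mul]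
      ring
    simp_rw [this]
    rw [Finset.sum_comm]
    refine Finset.sum_congr rfl fun x _ => ?_
    rw [Finset.sum_add_distrib, key, key]
  rw [hΩ]
  rw [Finset.sum_add_distrib]
  have sum_if : ∀ g : K × K → Prop,
      (∑ p ∈ L₁ ×ˢ L₂, (if g p then (Fintype.card F : ℂ) else 0)) =
        (Fintype.card F : ℂ) * ((L₁ ×ˢ L₂).filter (fun p => g p)).card := by
    intro g
    rw [← Finset.sum_filter, Finset.sum_const, nsmul_eq_mul]
    ring
  rw [sum_if, sum_if]
  have split : ∀ g : K × K → Prop,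
      ((L₁ ×ˢ L₂).filter (fun p => ¬ g p)).card + ((L₁ ×ˢ L₂).filter (fun p => g p)).card
        = L₁.card * L₂.card := by
    intro g
    rw [add_comm, Finset.card_filter_add_card_filter_not (p := fun p => g p),
      Finset.card_product]
  have e1 := split (fun p => Algebra.trace F K (b * p.1 + a * p.2) = 0)
  have e2 := split (fun p => Algebra.trace F K ((a + b) * p.1 + a * p.2) = 0)
  have e1' : (((L₁ ×ˢ L₂).filter
      (fun p => ¬ Algebra.trace F K (b * p.1 + a * p.2) = 0)).card : ℂ)
      + (((L₁ ×ˢ L₂).filter (fun p => Algebra.trace F K (b * p.1 + a * p.2) = 0)).card : ℂ)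
      = (L₁.card : ℂ) * L₂.card := by exact_mod_cast congrArg Nat.cast e1
  have e2' : (((L₁ ×ˢ L₂).filter
      (fun p => ¬ Algebra.trace F K ((a + b) * p.1 + a * p.2) = 0)).card : ℂ)
      + (((L₁ ×ˢ L₂).filter
          (fun p => Algebra.trace F K ((a + b) * p.1 + a * p.2) = 0)).card : ℂ)
      = (L₁.card : ℂ) * L₂.card := by exact_mod_cast congrArg Nat.cast e2
  rw [mul_add, one_div, inv_mul_cancel_left₀ hq, inv_mul_cancel_left₀ hq]
  linear_combination e1' + e2'
end

section
/- Let Δ_A be a coordinate subspace of F_{q^m} of dimension |A| and let L = Δ_A + u(Δ_B \ Δ_{B'}) ⊆ F_{q^m}[u]/(u²) with B' ⊂ B ⊆ [m], |A| + |B'| > 0. The trace code C_L = {(Tr((a+ub)z))_{z∈L} : a + ub ∈ F_{q^m}[u]/(u²)} has length q^{|A|}(q^{|B|} − q^{|B'|}) and exactly q^{|A| + |A∪B|} distinct codewords. -/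
open scoped Classical

/-- The ring trace `Tr : K + uK → F + uF`, `Tr(a + ub) = Tr_{K/F}(a) + u·Tr_{K/F}(b)`,
with `F[u]/(u²)` realized as `DualNumber`. -/
noncomputable def ringTrace (F : Type*) {K : Type*} [Field F] [Field K] [Algebra F K]
    (w : DualNumber K) : DualNumber F :=
  TrivSqZeroExt.inl (Algebra.trace F K w.fst) + TrivSqZeroExt.inr (Algebra.trace F K w.snd)

/-!
The codeword `c_{a+ub}` depends `F`-linearly on `(a, b) ∈ K × K`, so the code is the range of a
linear map and has `q ^ dim` elements. For `z = x + uy` with `x ∈ Δ_A`, `y ∈ Δ_B \ Δ_{B'}`, the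
codeword vanishes at `z` iff `Tr(xa) = 0` and `Tr(ya) + Tr(xb) = 0`. Since `Δ_B \ Δ_{B'}` is
nonempty and spans `Δ_B`, this holds for all such `z` iff `a ⊥ Δ_A + Δ_B` and `b ⊥ Δ_A` for the
trace form. The trace form of `K/F` is nondegenerate, so the kernel has dimension
`(m - |A ∪ B|) + (m - |A|)` and the code has dimension `|A| + |A ∪ B|`.
-/

open Module Submodule LinearMap TrivSqZeroExt

theorem Submodule.span_diff_of_lt {R M : Type*} [Ring R] [AddCommGroup M] [Module R M]
    {W' W : Submodule R M} (h : W' < W) : span R ((W : Set M) \ W') = W := by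
  refine le_antisymm (span_le.mpr Set.sdiff_subset) fun y hyW => ?_
  obtain ⟨y₀, hy₀W, hy₀W'⟩ := SetLike.exists_of_lt h
  by_cases hyW' : y ∈ W'
  · have hsum : y + y₀ ∈ (W : Set M) \ W' :=
      ⟨add_mem hyW hy₀W, fun h => hy₀W' (by simpa using sub_mem h hyW')⟩
    simpa using sub_mem (subset_span hsum) (subset_span (s := (W : Set M) \ W') ⟨hy₀W, hy₀W'⟩)
  · exact subset_span ⟨hyW, hyW'⟩

theorem Submodule.finrank_prod {K V V' : Type*} [DivisionRing K] [AddCommGroup V] [Module K V]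
    [AddCommGroup V'] [Module K V'] (p : Submodule K V) (q : Submodule K V')
    [FiniteDimensional K p] [FiniteDimensional K q] :
    finrank K (p.prod q) = finrank K p + finrank K q := by
  have h := LinearMap.finrank_range_of_inj (f := p.subtype.prodMap q.subtype)
    (Prod.map_injective.mpr ⟨p.injective_subtype, q.injective_subtype⟩)
  rwa [LinearMap.range_prodMap, p.range_subtype, q.range_subtype, Module.finrank_prod] at h

theorem LinearMap.forall_and_add_eq_zero_iff {R M N : Type*} [Semiring R] [AddCommGroup M]
    [AddCommGroup N] [Module R M] [Module R N] (f g : M →ₗ[R] N) (V : Submodule R M)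
    {D : Set M} (hD : D.Nonempty) :
    (∀ x ∈ V, ∀ y ∈ D, f x = 0 ∧ f y + g x = 0) ↔ V ⊔ span R D ≤ ker f ∧ V ≤ ker g := by
  constructor
  · intro h
    obtain ⟨y₀, hy₀⟩ := hD
    have hfD : D ⊆ ker f := fun y hy => by simpa using (h 0 V.zero_mem y hy).2
    have hfy₀ : f y₀ = 0 := hfD hy₀
    refine ⟨sup_le (fun x hx => (h x hx y₀ hy₀).1) (span_le.mpr hfD), fun x hx => ?_⟩
    simpa [hfy₀] using (h x hx y₀ hy₀).2
  · rintro ⟨hf, hg⟩ x hx y hy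
    have hfx : f x = 0 := hf (mem_sup_left hx)
    have hfy : f y = 0 := hf (mem_sup_right (subset_span hy))
    simp [hfx, hfy, mem_ker.mp (hg hx)]

section Basis

variable {F K ι : Type*} [Field F] [AddCommGroup K] [Module F K] (b : Basis ι F K)

theorem Module.Basis.finrank_span_image (S : Finset ι) :
    finrank F (span F (b '' S)) = S.card := by
  rw [Set.image_eq_range, finrank_span_eq_card (b := fun i : (S : Set ι) => b i)
    (b.linearIndependent.comp _ Subtype.val_injective)]
  simp

theorem Module.Basis.natCard_span_image [Finite F] (S : Finset ι) :
    Nat.card (span F (b '' S)) = Nat.card F ^ S.card := by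
  have := Module.Finite.span_of_finite F (S.finite_toSet.image b)
  rw [Module.natCard_eq_pow_finrank (K := F), b.finrank_span_image]

theorem Module.Basis.span_image_lt_span_image {S T : Finset ι} (h : S ⊂ T) :
    span F (b '' S) < span F (b '' T) := by
  refine lt_of_le_of_ne (span_mono (Set.image_mono (Finset.coe_subset.mpr h.subset))) fun he => ?_
  have := congrArg (fun W : Submodule F K => finrank F W) he
  simp only [b.finrank_span_image] at this
  exact (Finset.card_lt_card h).ne this

end Basis

theorem TrivSqZeroExt.natCard_setOf_fst_mem_and_snd_mem {R M : Type*} (s : Set R) (t : Set M) :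
    Nat.card {z : TrivSqZeroExt R M | z.fst ∈ s ∧ z.snd ∈ t} = Nat.card s * Nat.card t :=
  (Nat.card_congr (Equiv.Set.prod s t)).trans (Nat.card_prod _ _)

section TraceCode

variable (F : Type*) {K : Type*} [Field F] [Field K] [Algebra F K]

theorem ringTrace_eq_zero_iff (w : DualNumber K) :
    ringTrace F w = 0 ↔ Algebra.trace F K w.fst = 0 ∧ Algebra.trace F K w.snd = 0 := by
  simp [ringTrace, TrivSqZeroExt.ext_iff]

theorem ringTrace_inl_add_inr_mul_eq_zero_iff (a b : K) (z : DualNumber K) :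
    ringTrace F ((inl a + inr b) * z) = 0 ↔ Algebra.traceForm F K z.fst a = 0 ∧
      Algebra.traceForm F K z.snd a + Algebra.traceForm F K z.fst b = 0 := by
  simp [ringTrace_eq_zero_iff, mul_comm, add_comm]

/-- `traceCodeword F L (a, b)` is the codeword `c_{a+ub} = (Tr((a+ub)z))_{z ∈ L}`. -/
noncomputable def traceCodeword (L : Set (DualNumber K)) : K × K →ₗ[F] L → DualNumber F where
  toFun p z := ringTrace F ((inl p.1 + inr p.2) * z.val)
  map_add' p p' := by
    ext z <;> simp [ringTrace, add_mul]
    abel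
  map_smul' c p := by
    ext z <;> simp [ringTrace, mul_add]

@[simp]
theorem traceCodeword_apply (L : Set (DualNumber K)) (p : K × K) (z : L) :
    traceCodeword F L p z = ringTrace F ((inl p.1 + inr p.2) * z.val) :=
  rfl

theorem ker_traceCodeword {V W W' : Submodule F K} (hW : W' < W) :
    ker (traceCodeword F {z : DualNumber K | z.fst ∈ V ∧ z.snd ∈ (W : Set K) \ W'}) =
      ((Algebra.traceForm F K).orthogonal (V ⊔ W)).prod
        ((Algebra.traceForm F K).orthogonal V) := by
  ext ⟨a, b⟩
  obtain ⟨y₀, hy₀⟩ := SetLike.exists_of_lt hW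
  have key := forall_and_add_eq_zero_iff ((Algebra.traceForm F K).flip a)
    ((Algebra.traceForm F K).flip b) V (D := (W : Set K) \ W') ⟨y₀, hy₀⟩
  rw [span_diff_of_lt hW] at key
  simp only [SetLike.le_def, mem_ker] at key
  simp only [mem_ker, funext_iff, Subtype.forall, mem_prod, BilinForm.mem_orthogonal_iff,
    traceCodeword_apply, Pi.zero_apply, ringTrace_inl_add_inr_mul_eq_zero_iff]
  refine Iff.trans ?_ key
  constructor
  · intro h x hx y hy
    have hz := h (inl x + inr y) (by
      simpa only [Set.mem_ofPred_eq, fst_add, fst_inl, fst_inr, snd_add, snd_inl, snd_inr,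
        add_zero, zero_add] using ⟨hx, hy⟩)
    rwa [fst_add, fst_inl, fst_inr, snd_add, snd_inl, snd_inr, add_zero, zero_add] at hz
  · exact fun h z hz => h _ hz.1 _ hz.2

theorem finrank_range_traceCodeword [FiniteDimensional F K] [Algebra.IsSeparable F K]
    {V W W' : Submodule F K} (hW : W' < W) :
    finrank F (range (traceCodeword F {z : DualNumber K | z.fst ∈ V ∧ z.snd ∈ (W : Set K) \ W'})) =
      finrank F V + finrank F ↥(V ⊔ W) := by
  have hrank := (traceCodeword F
    {z : DualNumber K | z.fst ∈ V ∧ z.snd ∈ (W : Set K) \ W'}).finrank_range_add_finrank_ker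
  have hnd := traceForm_nondegenerate F K
  rw [ker_traceCodeword F hW, Submodule.finrank_prod, BilinForm.finrank_orthogonal hnd,
    BilinForm.finrank_orthogonal hnd, Module.finrank_prod] at hrank
  have := (V ⊔ W).finrank_le
  have := V.finrank_le
  omega

end TraceCode

theorem stmt19_general {F K : Type*} [Field F] [Fintype F] [Field K] [Fintype K] [Algebra F K]
    (m : ℕ) (bas : Module.Basis (Fin m) F K)
    (A B B' : Finset (Fin m)) (hBB : B' ⊂ B)
    (L : Set (DualNumber K))
    (hL : L = {z : DualNumber K | z.fst ∈ Submodule.span F (bas '' A) ∧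
        z.snd ∈ ((Submodule.span F (bas '' B) : Set K) \
          (Submodule.span F (bas '' B') : Set K))}) :
    Nat.card L = Fintype.card F ^ A.card *
        (Fintype.card F ^ B.card - Fintype.card F ^ B'.card) ∧
    Nat.card {c : L → DualNumber F // ∃ a b : K,
        c = fun z => ringTrace F
          ((TrivSqZeroExt.inl a + TrivSqZeroExt.inr b) * z.val)} =
      Fintype.card F ^ (A.card + (A ∪ B).card) := by
  have hlt := bas.span_image_lt_span_image (F := F) hBB
  rw [← Nat.card_eq_fintype_card]
  constructor
  · rw [hL]
    refine (natCard_setOf_fst_mem_and_snd_mem (span F (bas '' A) : Set K) _).trans ?_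
    rw [SetLike.coe_sort_coe, Nat.card_coe_set_eq, Set.ncard_sdiff hlt.le, ← Nat.card_coe_set_eq,
      ← Nat.card_coe_set_eq, SetLike.coe_sort_coe, SetLike.coe_sort_coe, bas.natCard_span_image,
      bas.natCard_span_image, bas.natCard_span_image]
  · have hcode : ∀ c, (∃ a b : K, c = fun z : L => ringTrace F ((inl a + inr b) * z.val)) ↔
        c ∈ range (traceCodeword F L) := fun c =>
      ⟨fun ⟨a, b, h⟩ => ⟨(a, b), h.symm⟩, fun ⟨(a, b), h⟩ => ⟨a, b, h.symm⟩⟩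
    rw [Nat.card_congr (Equiv.subtypeEquivRight hcode), Module.natCard_eq_pow_finrank (K := F), hL,
      finrank_range_traceCodeword F hlt, ← span_union, ← Set.image_union, ← Finset.coe_union,
      bas.finrank_span_image, bas.finrank_span_image]

/-- Let `Δ_S` (for `S ⊆ [m]`) be the coordinate subspace of `K` spanned by
the basis vectors indexed by `S`, with `A ⊆ [m]`, `B' ⊂ B ⊆ [m]`, `|A| + |B'| > 0`, and
let `L = Δ_A + u(Δ_B \ Δ_{B'}) ⊆ K[u]/(u²)`. Then the trace code
`C_L = {(Tr((a+ub)z))_{z ∈ L} : a + ub ∈ K[u]/(u²)}` has length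
`q^{|A|}(q^{|B|} - q^{|B'|})` and exactly `q^{|A| + |A∪B|}` distinct codewords. -/
theorem stmt19 {F K : Type*} [Field F] [Fintype F] [Field K] [Fintype K] [Algebra F K]
    (m : ℕ) (hm : Module.finrank F K = m) (bas : Module.Basis (Fin m) F K)
    (A B B' : Finset (Fin m)) (hBB : B' ⊂ B) (hpos : 0 < A.card + B'.card)
    (L : Set (DualNumber K))
    (hL : L = {z : DualNumber K | z.fst ∈ Submodule.span F (bas '' A) ∧
        z.snd ∈ ((Submodule.span F (bas '' B) : Set K) \
          (Submodule.span F (bas '' B') : Set K))}) :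
    Nat.card L = Fintype.card F ^ A.card *
        (Fintype.card F ^ B.card - Fintype.card F ^ B'.card) ∧
    Nat.card {c : L → DualNumber F // ∃ a b : K,
        c = fun z => ringTrace F
          ((TrivSqZeroExt.inl a + TrivSqZeroExt.inr b) * z.val)} =
      Fintype.card F ^ (A.card + (A ∪ B).card) :=
  stmt19_general m bas A B B' hBB L hL
end
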